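/- arXiv:2312.14820 — 2 statements merged into one kernel-verified Lean document; each statement's English description precedes it below -/
import Mathlib

section
/- For any constant sequence X = (x, x, …, x) ∈ (ℝ^d)^n, the Jacobian of self-attention f at X has operator norm exactly ‖V‖₂ with respect to the Frobenius norm; in particular if V = I_d then ‖D_X f‖₂ = 1. -/
/-! At a constant sequence `X = (x, …, x)` all attention weights equal `1/n`, and since the
weights sum to `1` identically, `f(X)ᵢ = V x + V ∑ⱼ Pᵢⱼ(X) (xⱼ - x)`. The factors `xⱼ - x` vanish
at `X`, so the derivatives of the weights drop out and `D_X f (H)ᵢ = V ((1/n) ∑ⱼ Hⱼ)`: the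
Jacobian is `B ∘ V ∘ M` with `B v = (v, …, v)` and `M` the mean. Since `‖B v‖ = √n ‖v‖`,
`‖M H‖ ≤ ‖H‖ / √n` (Cauchy–Schwarz) and `M ∘ B = id`, its operator norm is `‖V‖`. -/

open Matrix

/-- Self-attention as a map between sequence spaces equipped with the Frobenius norm
(`PiLp 2` over Euclidean spaces). -/
noncomputable def attnF (n d k : ℕ) (A : Matrix (Fin d) (Fin d) ℝ)
    (V : Matrix (Fin k) (Fin d) ℝ) :
    PiLp 2 (fun _ : Fin n => EuclideanSpace ℝ (Fin d)) →
      PiLp 2 (fun _ : Fin n => EuclideanSpace ℝ (Fin k)) :=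
  fun x => WithLp.toLp 2 fun i => WithLp.toLp 2 (V.mulVec (∑ j, (Real.exp ((x i) ⬝ᵥ (Aᵀ.mulVec (x j))) /
      ∑ l, Real.exp ((x i) ⬝ᵥ (Aᵀ.mulVec (x l)))) • x j))

section Softmax

variable {ι : Type*} [Fintype ι]

noncomputable def softmax (s : ι → ℝ) (j : ι) : ℝ :=
  Real.exp (s j) / ∑ l, Real.exp (s l)

lemma sum_exp_pos [Nonempty ι] (s : ι → ℝ) : 0 < ∑ l, Real.exp (s l) :=
  Finset.sum_pos (fun _ _ => Real.exp_pos _) Finset.univ_nonempty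

lemma sum_softmax [Nonempty ι] (s : ι → ℝ) : ∑ j, softmax s j = 1 := by
  simp only [softmax]
  rw [← Finset.sum_div]
  exact div_self (sum_exp_pos s).ne'

lemma softmax_const [Nonempty ι] (c : ℝ) (j : ι) :
    softmax (fun _ => c) j = (Fintype.card ι : ℝ)⁻¹ := by
  rw [softmax, Finset.sum_const, Finset.card_univ, nsmul_eq_mul,
    div_mul_cancel_right₀ (Real.exp_pos c).ne']

lemma DifferentiableAt.softmax {E : Type*} [NormedAddCommGroup E] [NormedSpace ℝ E] [Nonempty ι]
    {s : E → ι → ℝ} {p : E} (hs : ∀ l, DifferentiableAt ℝ (fun X => s X l) p) (j : ι) :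
    DifferentiableAt ℝ (fun X => softmax (s X) j) p := by
  have hden : DifferentiableAt ℝ (fun X => ∑ l, Real.exp (s X l)) p :=
    DifferentiableAt.fun_sum fun l _ => (hs l).exp
  simp only [_root_.softmax, div_eq_mul_inv]
  exact (hs j).exp.mul (hden.fun_inv (sum_exp_pos _).ne')

end Softmax

theorem HasFDerivAt.sum_smul_of_sum_eq_one {𝕜 E F ι : Type*} [NontriviallyNormedField 𝕜]
    [NormedAddCommGroup E] [NormedSpace 𝕜 E] [NormedAddCommGroup F] [NormedSpace 𝕜 F] [Fintype ι]
    {w : ι → E → 𝕜} {y : ι → E → F} {y' : ι → E →L[𝕜] F} {p : E} {c : F}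
    (hw : ∀ j, DifferentiableAt 𝕜 (w j) p) (hw_sum : ∀ X, ∑ j, w j X = 1)
    (hy : ∀ j, HasFDerivAt (y j) (y' j) p) (hyc : ∀ j, y j p = c) :
    HasFDerivAt (fun X => ∑ j, w j X • y j X) (∑ j, w j p • y' j) p := by
  have hshift : (fun X => ∑ j, w j X • y j X) = fun X => c + ∑ j, w j X • (y j X - c) := by
    funext X
    simp [smul_sub, Finset.sum_sub_distrib, ← Finset.sum_smul, hw_sum]
  rw [hshift]
  refine (HasFDerivAt.fun_sum fun j _ => (hw j).hasFDerivAt.smul ((hy j).sub_const c)).const_add c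
    |>.congr_fderiv ?_
  simp [hyc]

section ConstMean

variable (ι : Type*) (E : Type*) [NormedAddCommGroup E] [NormedSpace ℝ E]

noncomputable def seqConst : E →L[ℝ] PiLp 2 (fun _ : ι => E) :=
  (PiLp.continuousLinearEquiv 2 ℝ (fun _ : ι => E)).symm.toContinuousLinearMap.comp
    (ContinuousLinearMap.pi fun _ => ContinuousLinearMap.id ℝ E)

noncomputable def seqMean [Fintype ι] : PiLp 2 (fun _ : ι => E) →L[ℝ] E :=
  (Fintype.card ι : ℝ)⁻¹ • ∑ j, PiLp.proj 2 (fun _ : ι => E) j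

variable {ι E}

@[simp]
lemma seqConst_apply (v : E) (i : ι) : seqConst ι E v i = v := rfl

variable [Fintype ι]

lemma seqMean_apply (H : PiLp 2 (fun _ : ι => E)) :
    seqMean ι E H = (Fintype.card ι : ℝ)⁻¹ • ∑ j, H j := by
  simp [seqMean]

lemma norm_sq_seqConst (v : E) : ‖seqConst ι E v‖ ^ 2 = Fintype.card ι * ‖v‖ ^ 2 := by
  simp [PiLp.norm_sq_eq_of_L2]

lemma seqMean_seqConst [Nonempty ι] (v : E) : seqMean ι E (seqConst ι E v) = v := by
  simp [seqMean_apply, Finset.card_univ, ← Nat.cast_smul_eq_nsmul ℝ, smul_smul]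

lemma card_mul_norm_sq_seqMean_le (H : PiLp 2 (fun _ : ι => E)) :
    Fintype.card ι * ‖seqMean ι E H‖ ^ 2 ≤ ‖H‖ ^ 2 := by
  rcases (Fintype.card ι).eq_zero_or_pos with hι | hι
  · simp [hι]
  have hsum : ‖∑ j, H j‖ ^ 2 ≤ Fintype.card ι * ‖H‖ ^ 2 := by
    calc ‖∑ j, H j‖ ^ 2 ≤ (∑ j, ‖H j‖) ^ 2 := by gcongr; exact norm_sum_le _ _
      _ ≤ Fintype.card ι * ∑ j, ‖H j‖ ^ 2 := sq_sum_le_card_mul_sum_sq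
      _ = Fintype.card ι * ‖H‖ ^ 2 := by rw [PiLp.norm_sq_eq_of_L2]
  have hι' : (0 : ℝ) < Fintype.card ι := by exact_mod_cast hι
  rw [seqMean_apply, norm_smul, mul_pow, norm_inv, Real.norm_natCast]
  calc (Fintype.card ι : ℝ) * ((Fintype.card ι : ℝ)⁻¹ ^ 2 * ‖∑ j, H j‖ ^ 2)
      = (Fintype.card ι : ℝ)⁻¹ * ‖∑ j, H j‖ ^ 2 := by field_simp
    _ ≤ ‖H‖ ^ 2 := by rw [inv_mul_le_iff₀ hι']; exact hsum

theorem norm_seqConst_comp_comp_seqMean [Nonempty ι] {F : Type*} [NormedAddCommGroup F]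
    [NormedSpace ℝ F] (T : E →L[ℝ] F) : ‖seqConst ι F ∘L T ∘L seqMean ι E‖ = ‖T‖ := by
  have hι : (0 : ℝ) < Fintype.card ι := by exact_mod_cast Fintype.card_pos
  apply le_antisymm
  · refine ContinuousLinearMap.opNorm_le_bound _ (norm_nonneg T) fun H => ?_
    refine pow_le_pow_iff_left₀ (norm_nonneg _) (by positivity) two_ne_zero |>.mp ?_
    calc ‖seqConst ι F (T (seqMean ι E H))‖ ^ 2
        = Fintype.card ι * ‖T (seqMean ι E H)‖ ^ 2 := norm_sq_seqConst _
      _ ≤ Fintype.card ι * (‖T‖ * ‖seqMean ι E H‖) ^ 2 := by gcongr; exact T.le_opNorm _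
      _ = ‖T‖ ^ 2 * (Fintype.card ι * ‖seqMean ι E H‖ ^ 2) := by ring
      _ ≤ ‖T‖ ^ 2 * ‖H‖ ^ 2 := by gcongr; exact card_mul_norm_sq_seqMean_le H
      _ = (‖T‖ * ‖H‖) ^ 2 := by ring
  · refine ContinuousLinearMap.opNorm_le_bound _ (norm_nonneg _) fun v => ?_
    set L := seqConst ι F ∘L T ∘L seqMean ι E
    refine pow_le_pow_iff_left₀ (norm_nonneg _) (by positivity) two_ne_zero |>.mp ?_
    refine le_of_mul_le_mul_left ?_ hι
    calc Fintype.card ι * ‖T v‖ ^ 2 = ‖L (seqConst ι E v)‖ ^ 2 := by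
          simp [L, seqMean_seqConst, norm_sq_seqConst]
      _ ≤ (‖L‖ * ‖seqConst ι E v‖) ^ 2 := by gcongr; exact L.le_opNorm _
      _ = Fintype.card ι * (‖L‖ * ‖v‖) ^ 2 := by rw [mul_pow, norm_sq_seqConst]; ring

end ConstMean

section Attention

variable {n d k : ℕ} (A : Matrix (Fin d) (Fin d) ℝ)

noncomputable def attnWeight
    (X : PiLp 2 (fun _ : Fin n => EuclideanSpace ℝ (Fin d))) (i j : Fin n) : ℝ :=
  softmax (fun l => X i ⬝ᵥ Aᵀ *ᵥ X l) j

lemma attnF_apply (V : Matrix (Fin k) (Fin d) ℝ)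
    (X : PiLp 2 (fun _ : Fin n => EuclideanSpace ℝ (Fin d))) (i : Fin n) :
    attnF n d k A V X i =
      LinearMap.toContinuousLinearMap (toEuclideanLin V) (∑ j, attnWeight A X i j • X j) := by
  simp [attnF, attnWeight, softmax, Matrix.toLpLin_apply, mulVec_sum, mulVec_smul]

lemma differentiableAt_attnWeight (hn : 0 < n)
    (X : PiLp 2 (fun _ : Fin n => EuclideanSpace ℝ (Fin d))) (i j : Fin n) :
    DifferentiableAt ℝ (fun Y => attnWeight A Y i j) X := by
  have : Nonempty (Fin n) := ⟨⟨0, hn⟩⟩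
  refine DifferentiableAt.softmax (fun l => ?_) j
  simp only [dotProduct, mulVec]
  fun_prop

lemma sum_attnWeight (hn : 0 < n) (X : PiLp 2 (fun _ : Fin n => EuclideanSpace ℝ (Fin d)))
    (i : Fin n) : ∑ j, attnWeight A X i j = 1 :=
  have : Nonempty (Fin n) := ⟨⟨0, hn⟩⟩
  sum_softmax _

lemma attnWeight_const (hn : 0 < n) (x : EuclideanSpace ℝ (Fin d)) (i j : Fin n) :
    attnWeight A (WithLp.toLp 2 fun _ => x) i j = (n : ℝ)⁻¹ := by
  have : Nonempty (Fin n) := ⟨⟨0, hn⟩⟩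
  have h := softmax_const (ι := Fin n) (x ⬝ᵥ Aᵀ *ᵥ x) j
  rwa [Fintype.card_fin] at h

theorem hasFDerivAt_attnF_const (hn : 0 < n) (V : Matrix (Fin k) (Fin d) ℝ)
    (x : EuclideanSpace ℝ (Fin d)) :
    HasFDerivAt (attnF n d k A V)
      (seqConst (Fin n) _ ∘L LinearMap.toContinuousLinearMap (toEuclideanLin V) ∘L
        seqMean (Fin n) _)
      (WithLp.toLp 2 (fun _ => x) : PiLp 2 (fun _ : Fin n => EuclideanSpace ℝ (Fin d))) := by
  set X₀ : PiLp 2 (fun _ : Fin n => EuclideanSpace ℝ (Fin d)) := WithLp.toLp 2 fun _ => x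
  have hmean (i : Fin n) :
      HasFDerivAt (fun X => ∑ j, attnWeight A X i j • X j) (seqMean (Fin n) _) X₀ := by
    refine (HasFDerivAt.sum_smul_of_sum_eq_one (c := x)
      (fun j => differentiableAt_attnWeight A hn X₀ i j) (fun X => sum_attnWeight A hn X i)
      (fun j => PiLp.hasFDerivAt_apply 2 X₀ j) (fun _ => rfl)).congr_fderiv ?_
    simp [X₀, attnWeight_const A hn, seqMean, Finset.smul_sum]
  rw [← hasFDerivWithinAt_univ, hasFDerivWithinAt_piLp]
  intro i
  simp_rw [attnF_apply]
  exact ((LinearMap.toContinuousLinearMap _).hasFDerivAt.comp X₀ (hmean i)).hasFDerivWithinAt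

end Attention

/-- at a constant sequence `X = (x, …, x)`, the Jacobian of self-attention
has operator norm (w.r.t. the Frobenius norm) exactly `‖V‖₂`. -/
theorem attn_jacobian_const_seq {n d k : ℕ} (hn : 0 < n)
    (A : Matrix (Fin d) (Fin d) ℝ) (V : Matrix (Fin k) (Fin d) ℝ)
    (x : EuclideanSpace ℝ (Fin d)) :
    ‖fderiv ℝ (attnF n d k A V)
        (WithLp.toLp 2 (fun _ => x) : PiLp 2 (fun _ : Fin n => EuclideanSpace ℝ (Fin d)))‖ =
      ‖LinearMap.toContinuousLinearMap (Matrix.toEuclideanLin V)‖ := by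
  -- `HasFDerivAt.fderiv` needs these instances, and searching for them times out.
  have : ContinuousSMul ℝ (PiLp 2 (fun _ : Fin n => EuclideanSpace ℝ (Fin d))) :=
    IsBoundedSMul.continuousSMul
  have : ContinuousSMul ℝ (PiLp 2 (fun _ : Fin n => EuclideanSpace ℝ (Fin k))) :=
    IsBoundedSMul.continuousSMul
  rw [(hasFDerivAt_attnF_const A hn V x).fderiv]
  have : Nonempty (Fin n) := ⟨⟨0, hn⟩⟩
  exact norm_seqConst_comp_comp_seqMean _
end

section
/- Let A ∈ ℝ^{d×d} be nonzero. The set of sequences (x₁,…,x_n) in the closed unit ball of ℝ^d raised to the n-th power for which some i has the maximum max_{1≤j≤n} x_iᵀAᵀx_j attained at more than one index j has Lebesgue measure zero. -/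
/-!
If row `i` has two maximisers `j ≠ j'`, then `(A xᵢ) ⬝ᵥ xⱼ = (A xᵢ) ⬝ᵥ xⱼ'`. Either `A xᵢ = 0`,
which confines `xᵢ` to the proper subspace `ker A`, or one of `j, j'`, say `k`, differs from `i`,
and then, once all the other coordinates are fixed, `xₖ` lies on an affine hyperplane. Both are
null sets, the second by Fubini in the coordinate `k`.
-/

open Matrix MeasureTheory Set WithLp
open scoped Pointwise

theorem MeasureTheory.Measure.addHaar_preimage_singleton_eq_zero {E F : Type*}
    [NormedAddCommGroup E] [NormedSpace ℝ E] [MeasurableSpace E] [BorelSpace E]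
    [FiniteDimensional ℝ E] [AddCommGroup F] [Module ℝ F] (μ : Measure E) [μ.IsAddHaarMeasure]
    {L : E →ₗ[ℝ] F} (hL : L ≠ 0) (c : F) : μ (L ⁻¹' {c}) = 0 := by
  obtain h | ⟨v, hv⟩ := (L ⁻¹' {c}).eq_empty_or_nonempty
  · rw [h, measure_empty]
  have htranslate : L ⁻¹' {c} = v +ᵥ (LinearMap.ker L : Set E) := by
    ext u
    rw [mem_vadd_set_iff_neg_vadd_mem]
    simp_all [sub_eq_zero, neg_add_eq_sub]
  rw [htranslate, measure_vadd]
  exact Measure.addHaar_submodule μ _ (mt LinearMap.ker_eq_top.mp hL)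

theorem EuclideanSpace.volume_preimage_ofLp {ι : Type*} [Fintype ι] (s : Set (ι → ℝ)) :
    volume (ofLp ⁻¹' s : Set (EuclideanSpace ℝ ι)) = volume s :=
  (EuclideanSpace.volume_preserving_symm_measurableEquiv_toLp ι).measure_preimage_equiv s

theorem EuclideanSpace.volume_setOf_mulVec_eq {m n : Type*} [Fintype m] [Fintype n]
    {M : Matrix m n ℝ} (hM : M ≠ 0) (c : m → ℝ) :
    volume {v : EuclideanSpace ℝ n | M *ᵥ v.ofLp = c} = 0 := by
  classical
  refine (EuclideanSpace.volume_preimage_ofLp {u | M *ᵥ u = c}).trans ?_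
  exact Measure.addHaar_preimage_singleton_eq_zero volume (L := M.mulVecLin)
    (by rwa [← Matrix.toLin'_apply', Ne, LinearEquiv.map_eq_zero_iff]) c

theorem EuclideanSpace.volume_setOf_dotProduct_eq {n : Type*} [Fintype n]
    {w : n → ℝ} (hw : w ≠ 0) (c : ℝ) :
    volume {v : EuclideanSpace ℝ n | w ⬝ᵥ v.ofLp = c} = 0 := by
  classical
  refine (EuclideanSpace.volume_preimage_ofLp {u | w ⬝ᵥ u = c}).trans ?_
  exact Measure.addHaar_preimage_singleton_eq_zero volume (L := dotProductEquiv ℝ n w)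
    (by simpa using hw) c

theorem MeasureTheory.Measure.pi_eq_zero_of_forall_update {ι : Type*} [Fintype ι]
    [DecidableEq ι] {X : ι → Type*} [∀ i, MeasurableSpace (X i)] {μ : ∀ i, Measure (X i)}
    [∀ i, SigmaFinite (μ i)] {S : Set (∀ i, X i)} (hS : MeasurableSet S) (k : ι)
    (h : ∀ x, μ k {v | Function.update x k v ∈ S} = 0) : Measure.pi μ S = 0 := by
  obtain rfl | ⟨x, -⟩ := S.eq_empty_or_nonempty
  · exact measure_empty
  have hslice : (fun y ↦ ∫⁻ v, S.indicator 1 (Function.update y k v) ∂μ k) = 0 := by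
    ext y
    rw [Pi.zero_apply, ← h y]
    exact lintegral_indicator_one (measurable_update y hS)
  rw [← lintegral_indicator_one hS, lintegral_eq_lmarginal_univ x,
    ← Finset.insert_erase (Finset.mem_univ k),
    lmarginal_insert' _ (measurable_one.indicator hS) (Finset.notMem_erase k _), hslice]
  simp [lmarginal]

theorem volume_setOf_mulVec_ne_zero_dotProduct_eq {ι n : Type*} [Fintype ι] [DecidableEq ι]
    [Fintype n] (A : Matrix n n ℝ) {i k m : ι} (hik : i ≠ k) (hmk : m ≠ k) :
    volume {x : ι → EuclideanSpace ℝ n | A *ᵥ (x i).ofLp ≠ 0 ∧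
      (A *ᵥ (x i).ofLp) ⬝ᵥ (x k).ofLp = (A *ᵥ (x i).ofLp) ⬝ᵥ (x m).ofLp} = 0 := by
  refine Measure.pi_eq_zero_of_forall_update (by measurability) k fun x ↦ ?_
  simp only [mem_ofPred_eq, Function.update_of_ne hik, Function.update_of_ne hmk,
    Function.update_self]
  by_cases hx : A *ᵥ (x i).ofLp = 0
  · simp [hx]
  · exact measure_mono_null (fun v hv ↦ hv.2) (EuclideanSpace.volume_setOf_dotProduct_eq hx _)

/-- for `A ≠ 0`, the set of sequences in the unit ball for which some row
`i` attains the maximum of `j ↦ x_iᵀAᵀx_j` at more than one index has Lebesgue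
measure zero. -/
theorem argmax_nonunique_measure_zero {n d : ℕ}
    (A : Matrix (Fin d) (Fin d) ℝ) (hA : A ≠ 0) :
    volume {x : Fin n → EuclideanSpace ℝ (Fin d) |
      (∀ i, ‖x i‖ ≤ 1) ∧
      ∃ i j j', j ≠ j' ∧
        (∀ l, (x i) ⬝ᵥ (Aᵀ.mulVec (x l)) ≤ (x i) ⬝ᵥ (Aᵀ.mulVec (x j))) ∧
        (∀ l, (x i) ⬝ᵥ (Aᵀ.mulVec (x l)) ≤ (x i) ⬝ᵥ (Aᵀ.mulVec (x j')))} = 0 := by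
  refine measure_mono_null (t := (⋃ i, {x | A *ᵥ (x i).ofLp = 0}) ∪
    ⋃ i, ⋃ k, ⋃ m, ⋃ (_ : i ≠ k ∧ m ≠ k), {x | A *ᵥ (x i).ofLp ≠ 0 ∧
      (A *ᵥ (x i).ofLp) ⬝ᵥ (x k).ofLp = (A *ᵥ (x i).ofLp) ⬝ᵥ (x m).ofLp}) ?_ ?_
  · rintro x ⟨-, i, j, j', hjj', hj, hj'⟩
    have heq : (A *ᵥ (x i).ofLp) ⬝ᵥ (x j).ofLp = (A *ᵥ (x i).ofLp) ⬝ᵥ (x j').ofLp := by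
      simpa only [dotProduct_mulVec, vecMul_transpose] using le_antisymm (hj' j) (hj j')
    by_cases h0 : A *ᵥ (x i).ofLp = 0
    · exact Or.inl (mem_iUnion.2 ⟨i, h0⟩)
    refine Or.inr (mem_iUnion.2 ⟨i, ?_⟩)
    by_cases hji : j = i
    · subst hji
      exact mem_iUnion₂.2 ⟨j', j, mem_iUnion.2 ⟨⟨hjj', hjj'⟩, h0, heq.symm⟩⟩
    · exact mem_iUnion₂.2 ⟨j, j', mem_iUnion.2 ⟨⟨Ne.symm hji, hjj'.symm⟩, h0, heq⟩⟩
  · refine measure_union_null (measure_iUnion_null fun i ↦ ?_) ?_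
    · exact Measure.pi_eval_preimage_null
        (fun _ : Fin n ↦ (volume : Measure (EuclideanSpace ℝ (Fin d))))
        (EuclideanSpace.volume_setOf_mulVec_eq hA 0)
    · simp only [measure_iUnion_null_iff]
      exact fun i k m h ↦ volume_setOf_mulVec_ne_zero_dotProduct_eq A h.1 h.2
end
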